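/- arXiv:2106.15791 — 2 statements merged into one kernel-verified Lean document; each statement's English description precedes it below -/
import Mathlib

section
/- For any λ ≥ 0 and ρ ≥ 0, the worst-case expected loss over the Wasserstein ball of radius ρ is bounded by the Lagrangian relaxation: sup_{Q : W_c(Q,P₀) ≤ ρ} E_Q[ℓ] ≤ λρ + E_{P₀}[s_λ], where s_λ(z₀) = sup_{ξ}(ℓ(ξ) − λ c(ξ,z₀)). -/
open MeasureTheory ENNReal

/-- A coupling of measures `P` and `Q` on `Z` is a measure on `Z × Z`
whose marginals are `P` and `Q`. -/
def IsCoupling {Z : Type*} [MeasurableSpace Z] (M : Measure (Z × Z)) (P Q : Measure Z) : Prop :=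
  M.map Prod.fst = P ∧ M.map Prod.snd = Q

/-- Optimal transport cost between `P` and `Q` with cost `c`:
infimum over couplings of the expected cost. -/
noncomputable def transportCost {Z : Type*} [MeasurableSpace Z]
    (c : Z → Z → ℝ≥0∞) (P Q : Measure Z) : ℝ≥0∞ :=
  ⨅ M ∈ {M : Measure (Z × Z) | IsCoupling M P Q}, ∫⁻ p, c p.1 p.2 ∂M

/-- For any `λ ≥ 0` and `ρ ≥ 0`, the worst-case expected loss over the Wasserstein ball of
radius `ρ` is bounded by the Lagrangian relaxation: every probability measure `Q` with
`W_c(Q,P₀) ≤ ρ` satisfies `E_Q[ℓ] ≤ λρ + E_{P₀}[s_λ]`, where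
`s_λ(z₀) = sup_ξ (ℓ(ξ) − λ c(ξ,z₀))`. -/
theorem worst_case_le_lagrangian {Z : Type*} [MeasurableSpace Z]
    (P₀ : Measure Z) [IsProbabilityMeasure P₀]
    (c : Z → Z → ℝ) (hc0 : ∀ z z', 0 ≤ c z z') (hcz : ∀ z, c z z = 0)
    (ℓ : Z → ℝ) (hmeas : Measurable ℓ) (T : ℝ) (hbd : ∀ z, |ℓ z| ≤ T)
    (lam ρ : ℝ) (hlam : 0 ≤ lam) (hρ : 0 ≤ ρ)
    (s : Z → ℝ)
    (hs : ∀ z₀, IsLUB (Set.range fun ξ => ℓ ξ - lam * c ξ z₀) (s z₀))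
    (hsint : Integrable s P₀)
    (Q : Measure Z) [IsProbabilityMeasure Q]
    (hQ : transportCost (fun z z' => ENNReal.ofReal (c z z')) Q P₀ ≤ ENNReal.ofReal ρ) :
    ∫ z, ℓ z ∂Q ≤ lam * ρ + ∫ z, s z ∂P₀ := by
  have key : ∀ ε : ℝ, 0 < ε → ∫ z, ℓ z ∂Q ≤ lam * (ρ + ε) + ∫ z, s z ∂P₀ := by
    intro ε hε
    have hlt : transportCost (fun z z' => ENNReal.ofReal (c z z')) Q P₀
        < ENNReal.ofReal ρ + ENNReal.ofReal ε := by
      refine lt_of_le_of_lt hQ ?_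
      exact ENNReal.lt_add_right ENNReal.ofReal_ne_top
        (by simpa [ENNReal.ofReal_eq_zero] using hε.not_ge)
    rw [transportCost] at hlt
    obtain ⟨M, hlt'⟩ := iInf_lt_iff.mp hlt
    obtain ⟨hM, hMcost⟩ := iInf_lt_iff.mp hlt'
    obtain ⟨hfst, hsnd⟩ := hM
    haveI : IsProbabilityMeasure M := by
      constructor
      have : M.map Prod.fst Set.univ = 1 := by rw [hfst]; exact measure_univ
      rwa [Measure.map_apply measurable_fst MeasurableSet.univ, Set.preimage_univ] at this
    -- integrability of ℓ ∘ fst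
    have hℓM : Integrable (fun p : Z × Z => ℓ p.1) M := by
      refine (integrable_const T).mono'
        ((hmeas.comp measurable_fst).aestronglyMeasurable) (ae_of_all _ fun p => ?_)
      simpa using hbd p.1
    -- integrability of s ∘ snd
    have hsint' : Integrable s (M.map Prod.snd) := by rwa [hsnd]
    have hsM : Integrable (fun p : Z × Z => s p.2) M :=
      (integrable_map_measure hsint'.aestronglyMeasurable
        measurable_snd.aemeasurable).mp hsint'
    -- pointwise bound
    have hpt : ∀ p : Z × Z, ℓ p.1 - s p.2 ≤ lam * c p.1 p.2 := by
      intro p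
      have h := (hs p.2).1 ⟨p.1, rfl⟩
      simp only at h
      linarith
    set g : Z × Z → ℝ := fun p => ℓ p.1 - s p.2 with hg
    have hgint : Integrable g M := hℓM.sub hsM
    have hgmax : Integrable (fun p => max (g p) 0) M := hgint.pos_part
    -- ∫ g ≤ ∫ max g 0
    have h1 : ∫ p, g p ∂M ≤ ∫ p, max (g p) 0 ∂M :=
      integral_mono hgint hgmax fun p => le_max_left _ _
    have h2 : ENNReal.ofReal (∫ p, max (g p) 0 ∂M)
        = ∫⁻ p, ENNReal.ofReal (max (g p) 0) ∂M :=
      ofReal_integral_eq_lintegral_ofReal hgmax (ae_of_all _ fun p => le_max_right _ _)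
    have h3 : (∫⁻ p, ENNReal.ofReal (max (g p) 0) ∂M)
        ≤ ENNReal.ofReal lam * ∫⁻ p, ENNReal.ofReal (c p.1 p.2) ∂M := by
      rw [← lintegral_const_mul' _ _ ENNReal.ofReal_ne_top]
      refine lintegral_mono fun p => ?_
      rw [← ENNReal.ofReal_mul hlam]
      refine ENNReal.ofReal_le_ofReal ?_
      rcases le_or_gt (g p) 0 with h | h
      · simp only [max_eq_right h]
        exact mul_nonneg hlam (hc0 _ _)
      · rw [max_eq_left h.le]
        exact hpt p
    have h4 : ENNReal.ofReal lam * ∫⁻ p, ENNReal.ofReal (c p.1 p.2) ∂M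
        ≤ ENNReal.ofReal (lam * (ρ + ε)) := by
      rw [ENNReal.ofReal_mul hlam, ENNReal.ofReal_add hρ hε.le]
      exact mul_le_mul_right hMcost.le _
    have h5 : ∫ p, max (g p) 0 ∂M ≤ lam * (ρ + ε) := by
      have := (h2 ▸ h3).trans h4
      rwa [ENNReal.ofReal_le_ofReal_iff (by positivity)] at this
    -- identify marginal integrals
    have hℓQ : ∫ p, ℓ p.1 ∂M = ∫ z, ℓ z ∂Q := by
      rw [← hfst, integral_map measurable_fst.aemeasurable]
      rw [hfst]; exact hmeas.aestronglyMeasurable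
    have hsP : ∫ p, s p.2 ∂M = ∫ z, s z ∂P₀ := by
      rw [← hsnd, integral_map measurable_snd.aemeasurable hsint'.aestronglyMeasurable]
    have hsub : ∫ p, g p ∂M = ∫ z, ℓ z ∂Q - ∫ z, s z ∂P₀ := by
      rw [hg]
      rw [integral_sub hℓM hsM, hℓQ, hsP]
    have := h1.trans h5
    rw [hsub] at this
    linarith
  -- take ε → 0
  refine le_of_forall_pos_le_add fun ε hε => ?_
  have hε' : 0 < ε / (lam + 1) := by positivity
  have := key _ hε'
  have hfrac : lam * (ε / (lam + 1)) ≤ ε := by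
    rw [mul_div_assoc']
    rw [div_le_iff₀ (by linarith)]
    nlinarith
  nlinarith [this]
end

section
/- (Massart's finite class lemma) Let C be a finite set of functions from a fixed sample (z₁,…,z_n) to ℝ, and let B = max_{f∈C} √((1/n)Σᵢ f(zᵢ)²). Then E_σ[max_{f∈C} (1/n) Σᵢ σᵢ f(zᵢ)] ≤ B √(2 log|C| / n), where σᵢ are i.i.d. Rademacher random variables. -/
open Finset Real

lemma massart_mgf {n : ℕ} {ι : Type*} (C : Finset ι) (hC : C.Nonempty)
    (a : ι → Fin n → ℝ) (l : ℝ) (hl : 0 < l) (M2 : ℝ)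
    (hM2 : ∀ f ∈ C, ∑ i, a f i ^ 2 ≤ M2) :
    l * ((∑ σ : Fin n → Bool,
        C.sup' hC fun f => ∑ i, (if σ i then (1 : ℝ) else -1) * a f i) / 2 ^ n)
      ≤ Real.log C.card + l ^ 2 * M2 / 2 := by
  set E : ℝ := (∑ σ : Fin n → Bool,
      C.sup' hC fun f => ∑ i, (if σ i then (1 : ℝ) else -1) * a f i) / 2 ^ n with hE
  -- Step 1: exp (l * E) ≤ average of exp
  have hcard : (Fintype.card (Fin n → Bool) : ℝ) = 2 ^ n := by
    simp [Fintype.card_fun]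
  have hw : ∑ _σ : Fin n → Bool, ((2 : ℝ) ^ n)⁻¹ = 1 := by
    rw [Finset.sum_const, Finset.card_univ, Fintype.card_fun]
    simp only [Fintype.card_bool, Fintype.card_fin, nsmul_eq_mul, Nat.cast_pow,
      Nat.cast_ofNat]
    rw [mul_inv_cancel₀ (by positivity)]
  have jensen : Real.exp (l * E) ≤
      ∑ σ : Fin n → Bool, ((2:ℝ) ^ n)⁻¹ •
        Real.exp (l * C.sup' hC fun f => ∑ i, (if σ i then (1 : ℝ) else -1) * a f i) := by
    have h := convexOn_exp.map_sum_le (t := (Finset.univ : Finset (Fin n → Bool)))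
      (w := fun _ => ((2:ℝ)^n)⁻¹)
      (p := fun σ => l * C.sup' hC fun f => ∑ i, (if σ i then (1 : ℝ) else -1) * a f i)
      (fun _ _ => by positivity) hw (fun _ _ => Set.mem_univ _)
    have : l * E = ∑ σ : Fin n → Bool, ((2:ℝ)^n)⁻¹ •
        (l * C.sup' hC fun f => ∑ i, (if σ i then (1 : ℝ) else -1) * a f i) := by
      rw [hE]
      simp only [smul_eq_mul]
      simp only [div_eq_mul_inv, Finset.sum_mul, Finset.mul_sum, smul_eq_mul]
      exact Finset.sum_congr rfl fun σ _ => by ring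
    rw [this]
    exact h
  -- Step 2: pointwise bound of exp of sup by sum of exps
  have step2 : ∀ σ : Fin n → Bool,
      Real.exp (l * C.sup' hC fun f => ∑ i, (if σ i then (1 : ℝ) else -1) * a f i) ≤
      ∑ f ∈ C, Real.exp (l * ∑ i, (if σ i then (1 : ℝ) else -1) * a f i) := by
    intro σ
    obtain ⟨f, hf, hfe⟩ := Finset.exists_mem_eq_sup' hC
      (fun f => ∑ i, (if σ i then (1 : ℝ) else -1) * a f i)
    rw [hfe]
    exact Finset.single_le_sum (f := fun g => Real.exp
      (l * ∑ i, (if σ i then (1 : ℝ) else -1) * a g i)) (fun g _ => (Real.exp_pos _).le) hf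
  -- Step 4 : per-function MGF bound
  have step4 : ∀ f ∈ C, ∑ σ : Fin n → Bool,
      Real.exp (l * ∑ i, (if σ i then (1 : ℝ) else -1) * a f i) ≤
      2 ^ n * Real.exp (l ^ 2 * M2 / 2) := by
    intro f hf
    have hrw : ∀ σ : Fin n → Bool,
        Real.exp (l * ∑ i, (if σ i then (1 : ℝ) else -1) * a f i) =
        ∏ i, Real.exp (l * ((if σ i then (1 : ℝ) else -1) * a f i)) := by
      intro σ
      rw [← Real.exp_sum, Finset.mul_sum]
    calc ∑ σ : Fin n → Bool,
        Real.exp (l * ∑ i, (if σ i then (1 : ℝ) else -1) * a f i)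
        = ∑ σ : Fin n → Bool, ∏ i,
            Real.exp (l * ((if σ i then (1 : ℝ) else -1) * a f i)) := by
          exact Finset.sum_congr rfl fun σ _ => hrw σ
      _ = ∏ i, ∑ b : Bool, Real.exp (l * ((if b then (1 : ℝ) else -1) * a f i)) := by
          rw [show (∏ i, ∑ b : Bool, Real.exp (l * ((if b then (1 : ℝ) else -1) * a f i)))
            = _ from Finset.prod_univ_sum (fun _ => (Finset.univ : Finset Bool)) _,
            Fintype.piFinset_univ]
      _ = ∏ i, (2 * Real.cosh (l * a f i)) := by
          refine Finset.prod_congr rfl fun i _ => ?_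
          rw [Fintype.sum_bool]
          simp only [if_true, Bool.false_eq_true, if_false, Real.cosh_eq]
          ring
      _ ≤ ∏ i, (2 * Real.exp ((l * a f i) ^ 2 / 2)) := by
          refine Finset.prod_le_prod (fun i _ => by positivity) fun i _ => ?_
          have := Real.cosh_le_exp_half_sq (l * a f i)
          linarith
      _ = 2 ^ n * Real.exp (∑ i, (l * a f i) ^ 2 / 2) := by
          rw [Finset.prod_mul_distrib, Finset.prod_const, Real.exp_sum]
          simp
      _ ≤ 2 ^ n * Real.exp (l ^ 2 * M2 / 2) := by
          have hb : ∑ i, (l * a f i) ^ 2 / 2 ≤ l ^ 2 * M2 / 2 := by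
            have h1 : ∑ i, (l * a f i) ^ 2 / 2 = l ^ 2 * (∑ i, a f i ^ 2) / 2 := by
              rw [Finset.mul_sum, Finset.sum_div]
              exact Finset.sum_congr rfl fun i _ => by ring
            rw [h1]
            have := hM2 f hf
            nlinarith [sq_nonneg l]
          exact mul_le_mul_of_nonneg_left (Real.exp_le_exp.mpr hb) (by positivity)
  -- Step 5: combine
  have step5 : Real.exp (l * E) ≤ C.card * Real.exp (l ^ 2 * M2 / 2) := by
    refine jensen.trans ?_
    calc ∑ σ : Fin n → Bool, ((2:ℝ) ^ n)⁻¹ •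
          Real.exp (l * C.sup' hC fun f => ∑ i, (if σ i then (1 : ℝ) else -1) * a f i)
        ≤ ∑ σ : Fin n → Bool, ((2:ℝ) ^ n)⁻¹ *
          ∑ f ∈ C, Real.exp (l * ∑ i, (if σ i then (1 : ℝ) else -1) * a f i) := by
          refine Finset.sum_le_sum fun σ _ => ?_
          rw [smul_eq_mul]
          exact mul_le_mul_of_nonneg_left (step2 σ) (by positivity)
      _ = ((2:ℝ) ^ n)⁻¹ * ∑ f ∈ C, ∑ σ : Fin n → Bool,
          Real.exp (l * ∑ i, (if σ i then (1 : ℝ) else -1) * a f i) := by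
          rw [← Finset.mul_sum, Finset.sum_comm]
      _ ≤ ((2:ℝ) ^ n)⁻¹ * ∑ _f ∈ C, 2 ^ n * Real.exp (l ^ 2 * M2 / 2) := by
          refine mul_le_mul_of_nonneg_left (Finset.sum_le_sum step4) (by positivity)
      _ = C.card * Real.exp (l ^ 2 * M2 / 2) := by
          rw [Finset.sum_const, nsmul_eq_mul]
          field_simp
  -- Step 6: take logarithms
  have hcardpos : (0:ℝ) < C.card := by
    exact_mod_cast Finset.card_pos.mpr hC
  have := Real.log_le_log (Real.exp_pos _) step5
  rw [Real.log_exp, Real.log_mul (ne_of_gt hcardpos) (ne_of_gt (Real.exp_pos _)),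
    Real.log_exp] at this
  exact this



/-- Massart's finite class lemma: for a finite class `C` of functions evaluated on the fixed
sample `z₁, …, z_n`, with `B = max_{f∈C} √((1/n) ∑ᵢ f(zᵢ)²)`, the expected maximum of the
Rademacher averages satisfies `E_σ[max_{f∈C} (1/n) ∑ᵢ σᵢ f(zᵢ)] ≤ B √(2 log|C| / n)`. -/
theorem massart_finite_class {Z : Type*} {n : ℕ} (hn : 0 < n) (z : Fin n → Z)
    (C : Finset (Z → ℝ)) (hC : C.Nonempty) :
    (∑ σ : Fin n → Bool,
        C.sup' hC fun f => (n : ℝ)⁻¹ * ∑ i, (if σ i then (1 : ℝ) else -1) * f (z i)) / 2 ^ n ≤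
      (C.sup' hC fun f => Real.sqrt ((n : ℝ)⁻¹ * ∑ i, f (z i) ^ 2)) *
        Real.sqrt (2 * Real.log C.card / n) := by
  classical
  have hnR : (0:ℝ) < n := by exact_mod_cast hn
  set L := Real.log C.card with hLdef
  set M2 := C.sup' hC fun f => ∑ i, f (z i) ^ 2 with hM2def
  have hM2nonneg : 0 ≤ M2 := by
    obtain ⟨f, hf⟩ := id hC
    have h1 : (∑ i, f (z i) ^ 2) ≤ M2 := Finset.le_sup' (fun f => ∑ i, f (z i) ^ 2) hf
    have h2 : (0:ℝ) ≤ ∑ i, f (z i) ^ 2 := by positivity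
    linarith
  have hL : 0 ≤ L := Real.log_nonneg (by exact_mod_cast Finset.card_pos.mpr hC)
  set E := (∑ σ : Fin n → Bool,
      C.sup' hC fun f => ∑ i, (if σ i then (1 : ℝ) else -1) * f (z i)) / 2 ^ n with hEdef
  have master : ∀ l : ℝ, 0 < l → l * E ≤ L + l ^ 2 * M2 / 2 := fun l hl =>
    massart_mgf C hC (fun f i => f (z i)) l hl M2
      (fun f hf => Finset.le_sup' (fun f => ∑ i, f (z i) ^ 2) hf)
  -- key bound
  have key : E ≤ Real.sqrt (2 * M2 * L) := by
    rcases eq_or_lt_of_le hM2nonneg with hM2z | hM2pos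
    · have h0 : Real.sqrt (2 * M2 * L) = 0 := by rw [← hM2z]; simp
      rw [h0]
      have h00 : (0:ℝ) = 0 + 0 := by ring
      refine le_of_forall_pos_le_add fun ε hε => ?_
      have hlp : (0:ℝ) < (L + 1) / ε := by positivity
      have hm := master ((L + 1) / ε) hlp
      rw [← hM2z] at hm
      have hm' : (L + 1) / ε * E ≤ L := by
        calc (L + 1) / ε * E ≤ L + ((L+1)/ε) ^ 2 * 0 / 2 := hm
          _ = L := by ring
      have h3 : E ≤ ε := by
        by_contra hcon
        push_neg at hcon
        have hlt : (L + 1) / ε * ε < (L + 1) / ε * E := mul_lt_mul_of_pos_left hcon hlp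
        rw [div_mul_cancel₀ _ (ne_of_gt hε)] at hlt
        linarith
      linarith
    · rcases eq_or_lt_of_le hL with hLz | hLpos
      · have h0 : Real.sqrt (2 * M2 * L) = 0 := by rw [← hLz]; simp
        rw [h0]
        refine le_of_forall_pos_le_add fun ε hε => ?_
        have hlp : (0:ℝ) < 2 * ε / M2 := by positivity
        have hm := master (2 * ε / M2) hlp
        rw [← hLz] at hm
        have h2 : 2 * ε / M2 * ((2 * ε / M2) * M2 / 2) = (2 * ε / M2) ^ 2 * M2 / 2 := by
          ring
        have h3 : E ≤ (2 * ε / M2) * M2 / 2 := by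
          nlinarith [hm, hlp]
        have h4 : (2 * ε / M2) * M2 / 2 = ε := by field_simp
        linarith [h3, h4.le]
      · set s := Real.sqrt (2 * M2 * L) with hsdef
        have hs2 : s ^ 2 = 2 * M2 * L := Real.sq_sqrt (by positivity)
        have hspos : 0 < s := Real.sqrt_pos.mpr (by positivity)
        have hm := master (s / M2) (by positivity)
        have hm' : s * E ≤ s ^ 2 := by
          have := mul_le_mul_of_nonneg_right hm hM2nonneg
          have hexp : (s / M2) * E * M2 = s * E := by field_simp
          have hexp2 : (L + (s / M2) ^ 2 * M2 / 2) * M2 = L * M2 + s ^ 2 / 2 := by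
            field_simp
          rw [hexp, hexp2] at this
          nlinarith [this, hs2]
        nlinarith [hm', hspos]
  -- rewrite LHS
  have hsup : ∀ σ : Fin n → Bool,
      (C.sup' hC fun f => (n : ℝ)⁻¹ * ∑ i, (if σ i then (1 : ℝ) else -1) * f (z i)) =
      (n : ℝ)⁻¹ * C.sup' hC fun f => ∑ i, (if σ i then (1 : ℝ) else -1) * f (z i) := by
    intro σ
    refine (Finset.comp_sup'_eq_sup'_comp hC (fun x : ℝ => (n : ℝ)⁻¹ * x) ?_).symm
    intro x y
    exact (Monotone.map_max (fun u v huv => mul_le_mul_of_nonneg_left huv (by positivity)))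
  have hLHS : (∑ σ : Fin n → Bool,
      C.sup' hC fun f => (n : ℝ)⁻¹ * ∑ i, (if σ i then (1 : ℝ) else -1) * f (z i)) / 2 ^ n
      = (n : ℝ)⁻¹ * E := by
    rw [hEdef]
    rw [Finset.sum_congr rfl fun σ _ => hsup σ, ← Finset.mul_sum]
    ring
  -- rewrite B
  have hB : (C.sup' hC fun f => Real.sqrt ((n : ℝ)⁻¹ * ∑ i, f (z i) ^ 2)) =
      Real.sqrt ((n : ℝ)⁻¹ * M2) := by
    rw [hM2def]
    refine (Finset.comp_sup'_eq_sup'_comp hC (fun x : ℝ => Real.sqrt ((n : ℝ)⁻¹ * x)) ?_).symm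
    intro x y
    exact (Monotone.map_max (fun u v huv =>
      Real.sqrt_le_sqrt (mul_le_mul_of_nonneg_left huv (by positivity))))
  rw [hLHS, hB]
  have hRHS : Real.sqrt ((n : ℝ)⁻¹ * M2) * Real.sqrt (2 * L / n) =
      (n : ℝ)⁻¹ * Real.sqrt (2 * M2 * L) := by
    rw [← Real.sqrt_mul (by positivity) (2 * L / n)]
    rw [show (n : ℝ)⁻¹ * M2 * (2 * L / n) = (2 * M2 * L) * ((n:ℝ)⁻¹ * (n:ℝ)⁻¹) by
      field_simp]
    rw [Real.sqrt_mul (by positivity) _, Real.sqrt_mul_self (by positivity)]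
    ring
  rw [hRHS]
  exact mul_le_mul_of_nonneg_left key (by positivity)
end
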